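/- Generalization of the structural constraint (Proposition 1): with ω defined by the recursion ω_{r_{1:i}} = W^{i+1}_{1:D} + Σ_{k=1}^{i} W^{i+1}_{D+k} · r_k · ω_{r_{1:k−1}}, if two patterns r_{1:i}, r'_{1:i} ∈ {0,1}^i differ exactly in coordinates j_1 < j_2 < ... < j_n, then there exist scalars α_1,...,α_n ∈ ℝ such that ω_{r_{1:i}} − ω_{r'_{1:i}} = Σ_{k=1}^{n} α_k · ω_{r_{1:j_k−1}}. -/

import Mathlib

/-! Strong induction on `i`. Writing `ρ_k = [r_k]`, the recursion gives
`ω_r(i) - ω_{r'}(i) = ∑_k W_k • (ρ_k • ω_r(k-1) - ρ'_k • ω_{r'}(k-1))`, and each summand splits as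
`(ρ_k - ρ'_k) • ω_r(k-1) + ρ'_k • (ω_r(k-1) - ω_{r'}(k-1))`. The first part vanishes unless
`k ∈ J`, and the second lies in the span of the `ω_r(j-1)`, `j ∈ J`, by induction. -/

/-- The decision weights of the oblique decision tree induced by a locally
constant network with one neuron per layer. -/
noncomputable def omega {D : ℕ} (W1 : Fin D → ℝ) (Win : ℕ → Fin D → ℝ)
    (Wrec : ℕ → ℕ → ℝ) (r : ℕ → Bool) : ℕ → (Fin D → ℝ)
  | 0 => W1
  | (i + 1) => fun j =>
      Win (i + 1) j +
        ∑ k ∈ (Finset.Icc 1 (i + 1)).attach,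
          Wrec (i + 1) k.1 * (if r k.1 then 1 else 0) *
            omega W1 Win Wrec r (k.1 - 1) j
  decreasing_by
    have := Finset.mem_Icc.mp k.2
    omega

section

variable {D : ℕ} (W1 : Fin D → ℝ) (Win : ℕ → Fin D → ℝ) (Wrec : ℕ → ℕ → ℝ)

theorem omega_succ (r : ℕ → Bool) (i : ℕ) :
    omega W1 Win Wrec r (i + 1) = Win (i + 1) +
      ∑ k ∈ Finset.Icc 1 (i + 1),
        (Wrec (i + 1) k * if r k then 1 else 0) • omega W1 Win Wrec r (k - 1) := by
  ext j
  rw [omega]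
  beta_reduce
  rw [Finset.sum_attach (Finset.Icc 1 (i + 1))
    fun k => Wrec (i + 1) k * (if r k then 1 else 0) * omega W1 Win Wrec r (k - 1) j]
  simp only [Pi.add_apply, Finset.sum_apply, Pi.smul_apply, smul_eq_mul]

theorem omega_sub_omega_mem_span {r r' : ℕ → Bool} {J : Set ℕ} (i : ℕ)
    (h : Set.EqOn r r' (Set.Icc 1 i \ J)) :
    omega W1 Win Wrec r i - omega W1 Win Wrec r' i ∈
      Submodule.span ℝ ((fun j => omega W1 Win Wrec r (j - 1)) '' J) := by
  induction i using Nat.strong_induction_on with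
  | _ i ih =>
  cases i with
  | zero => simp [omega]
  | succ i =>
  rw [omega_succ, omega_succ, add_sub_add_left_eq_sub, ← Finset.sum_sub_distrib]
  refine Submodule.sum_mem _ fun k hk => ?_
  obtain ⟨hk1, hki⟩ := Finset.mem_Icc.mp hk
  have ih_k := ih (k - 1) (by omega)
    (h.mono (Set.sdiff_subset_sdiff_left (Set.Icc_subset_Icc_right (by omega))))
  simp only [mul_smul, ← smul_sub]
  refine Submodule.smul_mem _ _ ?_
  by_cases hkJ : k ∈ J
  · have hk_mem : omega W1 Win Wrec r (k - 1) ∈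
        Submodule.span ℝ ((fun j => omega W1 Win Wrec r (j - 1)) '' J) :=
      Submodule.subset_span ⟨k, hkJ, rfl⟩
    convert add_mem (Submodule.smul_mem _ ((if r k then 1 else 0) - if r' k then 1 else 0) hk_mem)
      (Submodule.smul_mem _ (if r' k then 1 else 0) ih_k) using 1
    module
  · rw [h ⟨⟨hk1, hki⟩, hkJ⟩, ← smul_sub]
    exact Submodule.smul_mem _ _ ih_k

end

theorem omega_structural_constraint_general_general {D : ℕ} (W1 : Fin D → ℝ)
    (Win : ℕ → Fin D → ℝ) (Wrec : ℕ → ℕ → ℝ)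
    (i : ℕ) (J : Finset ℕ)
    (r r' : ℕ → Bool)
    (hdiff : ∀ k ∈ Finset.Icc 1 i, (r k = r' k ↔ k ∉ J)) :
    ∃ α : ℕ → ℝ, ∀ idx : Fin D,
      omega W1 Win Wrec r i idx - omega W1 Win Wrec r' i idx
        = ∑ j ∈ J, α j * omega W1 Win Wrec r (j - 1) idx := by
  obtain ⟨α, hα⟩ := (Submodule.mem_span_image_finset_iff_exists_fun' ℝ).mp <|
    omega_sub_omega_mem_span W1 Win Wrec (J := ↑J) i fun k hk =>
      (hdiff k (Finset.mem_Icc.mpr hk.1)).mpr hk.2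
  refine ⟨α, fun idx => ?_⟩
  rw [← Pi.sub_apply, ← hα, Finset.sum_apply]
  rfl

/-- Proposition 1: if two depth-i patterns differ exactly in the
coordinates of J ⊆ {1,…,i}, the weight difference is a linear combination of the
weights ω_{r_{1:j−1}} for j ∈ J. -/
theorem omega_structural_constraint_general {D : ℕ} (W1 : Fin D → ℝ)
    (Win : ℕ → Fin D → ℝ) (Wrec : ℕ → ℕ → ℝ)
    (i : ℕ) (J : Finset ℕ) (hJ : J ⊆ Finset.Icc 1 i)
    (r r' : ℕ → Bool)
    (hdiff : ∀ k ∈ Finset.Icc 1 i, (r k = r' k ↔ k ∉ J)) :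
    ∃ α : ℕ → ℝ, ∀ idx : Fin D,
      omega W1 Win Wrec r i idx - omega W1 Win Wrec r' i idx
        = ∑ j ∈ J, α j * omega W1 Win Wrec r (j - 1) idx :=
  omega_structural_constraint_general_general W1 Win Wrec i J r r' hdiff
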